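/- arXiv:math/0512383 — 4 statements merged into one kernel-verified Lean document; each statement's English description precedes it below -/
import Mathlib

section
/- Let M be a module over R, and for 1 ≤ i,j ≤ m let d_j, S^i : M → M be linear maps such that the d_j pairwise commute, the S^i pairwise commute, and S^i ∘ d_j − d_j ∘ S^i = r·δ^i_j·id for a fixed scalar r. Then for every natural number p and every index j, (Σ over (i_1,...,i_p) of d_{i_1}···d_{i_p} S^{i_1}···S^{i_p}) ∘ d_j = d_j ∘ (Σ over (i_1,...,i_p) of d_{i_1}···d_{i_p} S^{i_1}···S^{i_p}) + r·p·d_j ∘ (Σ over (i_1,...,i_{p−1}) of d_{i_1}···d_{i_{p−1}} S^{i_1}···S^{i_{p−1}}), where all indices range over {1,...,m} and summation over repeated indices is understood. -/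
/-!
Writing `Φ T = ∑ₖ d k * T * S k` (`sandwichSum`), commutativity of the `d`'s gives
`A (p + 1) = Φ (A p)`. If
`T * d j = d j * T + U`, then pushing `d j` through `S k` with the commutation relation gives
`Φ T * d j = d j * Φ T + Φ U + r • (d j * T)`: every application of `Φ` contributes one more
term `r • d j * A p`, and induction on `p` yields the factor `r * p`.
-/

section

variable {R E ι : Type*} [CommRing R] [Ring E] [Algebra R E] [Fintype ι] {d S : ι → E}

variable (d S) in
def wordSum (p : ℕ) : E :=
  ∑ i : Fin p → ι, (List.ofFn fun l => d (i l)).prod * (List.ofFn fun l => S (i l)).prod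

variable (d S) in
def sandwichSum (T : E) : E := ∑ k, d k * T * S k

theorem wordSum_zero : wordSum d S 0 = 1 := by simp [wordSum]

theorem wordSum_succ (hd : ∀ i j, Commute (d i) (d j)) (p : ℕ) :
    wordSum d S (p + 1) = sandwichSum d S (wordSum d S p) := by
  rw [wordSum, ← (Fin.snocEquiv fun _ => ι).sum_comp, Fintype.sum_prod_type, sandwichSum]
  refine Finset.sum_congr rfl fun k _ => ?_
  rw [wordSum, Finset.mul_sum, Finset.sum_mul]
  refine Finset.sum_congr rfl fun i _ => ?_
  have hk : Commute (d k) (List.ofFn fun l => d (i l)).prod :=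
    Commute.list_prod_right _ _ fun x hx => by
      obtain ⟨l, rfl⟩ := List.mem_ofFn.mp hx
      exact hd k (i l)
  simp only [Fin.snocEquiv_apply, List.ofFn_succ', Fin.snoc_castSucc, Fin.snoc_last,
    List.prod_concat, ← hk.eq, mul_assoc]

theorem sandwichSum_smul_mul_left (hd : ∀ i j, Commute (d i) (d j)) (c : R) (j : ι) (T : E) :
    sandwichSum d S (c • (d j * T)) = c • (d j * sandwichSum d S T) := by
  simp only [sandwichSum, Finset.mul_sum, Finset.smul_sum, smul_mul_assoc, mul_smul_comm,
    ← mul_assoc, (hd _ j).eq]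

variable [DecidableEq ι]

theorem sandwichSum_mul_of_mul_eq (hd : ∀ i j, Commute (d i) (d j)) {r : R}
    (hSd : ∀ i j, S i * d j - d j * S i = (if i = j then r else 0) • (1 : E))
    {j : ι} {T U : E} (hT : T * d j = d j * T + U) :
    sandwichSum d S T * d j = d j * sandwichSum d S T + sandwichSum d S U + r • (d j * T) := by
  have hterm : ∀ k, d k * T * S k * d j =
      d j * (d k * T * S k) + d k * U * S k + (if k = j then r else 0) • (d k * T) := by
    intro k
    rw [mul_assoc, sub_eq_iff_eq_add.mp (hSd k j), mul_add, mul_smul_comm, mul_one,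
      ← mul_assoc, mul_assoc (d k), hT, mul_add, add_mul, ← mul_assoc, (hd k j).eq]
    simp only [mul_assoc]
    abel
  simp only [sandwichSum, Finset.sum_mul, hterm, Finset.sum_add_distrib, Finset.mul_sum, ite_smul,
    zero_smul, Finset.sum_ite_eq', Finset.mem_univ, if_true]

theorem wordSum_succ_mul (hd : ∀ i j, Commute (d i) (d j)) {r : R}
    (hSd : ∀ i j, S i * d j - d j * S i = (if i = j then r else 0) • (1 : E)) (p : ℕ) (j : ι) :
    wordSum d S (p + 1) * d j =
      d j * wordSum d S (p + 1) + (r * (p + 1 : ℕ)) • (d j * wordSum d S p) := by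
  induction p with
  | zero =>
    rw [wordSum_succ hd, sandwichSum_mul_of_mul_eq hd hSd (U := 0) (by simp [wordSum_zero])]
    simp [sandwichSum]
  | succ p ih =>
    rw [wordSum_succ hd (p + 1), sandwichSum_mul_of_mul_eq hd hSd ih,
      sandwichSum_smul_mul_left hd, ← wordSum_succ hd p, add_assoc, ← add_smul]
    congr 2
    push_cast
    ring

end

theorem lemma3_sum_commutation_general
    (M : Type) [AddCommGroup M] [Module ℝ M] (m : ℕ)
    (d S : Fin m → Module.End ℝ M) (r : ℝ)
    (hd : ∀ i j, d i * d j = d j * d i)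
    (hSd : ∀ i j, S i * d j - d j * S i = (if i = j then r else 0) • (1 : Module.End ℝ M))
    (A : ℕ → Module.End ℝ M)
    (hA : ∀ p, A p = ∑ i : Fin p → Fin m,
      (List.ofFn fun l => d (i l)).prod * (List.ofFn fun l => S (i l)).prod)
    (p : ℕ) (j : Fin m) :
    A p * d j = d j * A p + ((r * (p : ℝ)) • (d j * A (p - 1))) := by
  obtain rfl : A = wordSum d S := funext hA
  cases p with
  | zero => simp [wordSum_zero]
  | succ p => exact wordSum_succ_mul hd hSd p j

/-- Lemma 3 of the paper: Let `M` be an ℝ-module and, for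
`1 ≤ i, j ≤ m`, let `d j, S i : M → M` be linear maps such that the `d j` pairwise
commute, the `S i` pairwise commute, and `S i ∘ d j − d j ∘ S i = r·δ^i_j·id` for a
fixed scalar `r`.  Then for every natural number `p ≥ 1` and every index `j`,
`(Σ_{i₁,…,i_p} d_{i₁}⋯d_{i_p} S^{i₁}⋯S^{i_p}) ∘ d_j
  = d_j ∘ (Σ_{i₁,…,i_p} d_{i₁}⋯d_{i_p} S^{i₁}⋯S^{i_p})
    + r·p· d_j ∘ (Σ_{i₁,…,i_{p−1}} d_{i₁}⋯d_{i_{p−1}} S^{i₁}⋯S^{i_{p−1}})`,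
where all indices range over `{1,…,m}`.  (Composition of endomorphisms is written
multiplicatively in `Module.End ℝ M`.) -/
theorem lemma3_sum_commutation
    (M : Type) [AddCommGroup M] [Module ℝ M] (m : ℕ)
    (d S : Fin m → Module.End ℝ M) (r : ℝ)
    (hd : ∀ i j, d i * d j = d j * d i)
    (hS : ∀ i j, S i * S j = S j * S i)
    (hSd : ∀ i j, S i * d j - d j * S i = (if i = j then r else 0) • (1 : Module.End ℝ M))
    (A : ℕ → Module.End ℝ M)
    (hA : ∀ p, A p = ∑ i : Fin p → Fin m,
      (List.ofFn fun l => d (i l)).prod * (List.ofFn fun l => S (i l)).prod)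
    (p : ℕ) (hp : 1 ≤ p) (j : Fin m) :
    A p * d j = d j * A p + ((r * (p : ℝ)) • (d j * A (p - 1))) :=
  lemma3_sum_commutation_general M m d S r hd hSd A hA p j
end

section
/- Let M be a module and d_j, S^i (1 ≤ i,j ≤ m) linear endomorphisms of M such that the d_j pairwise commute, the S^i pairwise commute, and S^i d_j − d_j S^i = r δ^i_j id for a fixed scalar r. For a multi-index J write d_J and S^J for the corresponding products of operators. Then for every natural number p ≥ 1 and every j, Σ_{|I|=p} (|I|!/I!) d_I S^I d_j = d_j ( Σ_{|I|=p} (|I|!/I!) d_I S^I + r·p·Σ_{|J|=p−1} (|J|!/J!) d_J S^J ). -/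
/-!
Commuting `d_j` past `S^I` acts like differentiation in `S_j`: splitting off the factor
`(S^j)^{I_j}`, which is the only one not commuting with `d_j`, gives
`S^I d_j = d_j S^I + r I_j S^{I - e_j}`. Summing against the multinomial weights, the correction
terms are reindexed by `I = J + e_j` over `|J| = p - 1`, where `d_{J + e_j} = d_j d_J` and
`(J_j + 1) · p!/(J + e_j)! = p · (p-1)!/J!`.
-/

open Finset Function
open scoped Nat

section CommutingFamily

variable {M : Type*} [Monoid M] {m : ℕ}

theorem List.prod_ofFn_eq_mul_noncommProd_erase (g : Fin m → M)
    (hg : ∀ i k, Commute (g i) (g k)) (j : Fin m) :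
    (List.ofFn g).prod = g j * (univ.erase j).noncommProd g (fun a _ b _ _ => hg a b) := by
  have hl : (List.ofFn g).prod = univ.noncommProd g (fun a _ b _ _ => hg a b) := by
    unfold Finset.noncommProd
    simp only [Fin.univ_val_map, Multiset.noncommProd_coe]
  exact hl.trans (Finset.mul_noncommProd_erase univ (mem_univ j) g _).symm

theorem List.prod_ofFn_pow_update (f : Fin m → M) (hf : ∀ i k, Commute (f i) (f k))
    (J : Fin m → ℕ) (j : Fin m) (n : ℕ) :
    (List.ofFn fun i => f i ^ update J j n i).prod
      = f j ^ n * (List.ofFn fun i => f i ^ update J j 0 i).prod := by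
  have hpow : ∀ K : Fin m → ℕ, ∀ i k, Commute (f i ^ K i) (f k ^ K k) :=
    fun K i k => (hf i k).pow_pow _ _
  rw [prod_ofFn_eq_mul_noncommProd_erase _ (hpow _) j,
    prod_ofFn_eq_mul_noncommProd_erase _ (hpow _) j]
  simp only [update_self, pow_zero, one_mul]
  congr 1
  refine Finset.noncommProd_congr rfl (fun i hi => ?_) _
  simp only [update_of_ne (ne_of_mem_erase hi)]

theorem List.prod_ofFn_pow_update_succ (f : Fin m → M) (hf : ∀ i k, Commute (f i) (f k))
    (J : Fin m → ℕ) (j : Fin m) :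
    (List.ofFn fun i => f i ^ update J j (J j + 1) i).prod
      = f j * (List.ofFn fun i => f i ^ J i).prod := by
  have hJ := prod_ofFn_pow_update f hf J j (J j)
  rw [update_eq_self] at hJ
  rw [prod_ofFn_pow_update f hf J j (J j + 1), hJ, pow_succ', mul_assoc]

end CommutingFamily

section CanonicalCommutation

variable {R A : Type*} [CommSemiring R] [Semiring A] [Algebra R A]

theorem pow_mul_eq_mul_pow_add_smul {a b : A} {r : R} (h : a * b = b * a + r • 1) (n : ℕ) :
    a ^ n * b = b * a ^ n + ((n : R) * r) • a ^ (n - 1) := by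
  induction n with
  | zero => simp
  | succ k ih =>
    rw [pow_succ', mul_assoc, ih, mul_add, ← mul_assoc, h, mul_smul_comm]
    cases k with
    | zero => simp
    | succ l =>
      simp only [add_mul, smul_mul_assoc, one_mul, mul_assoc, ← pow_succ', add_tsub_cancel_right]
      push_cast
      rw [add_assoc, ← add_smul]
      ring_nf

-- For `I j = 0` the truncated `I j - 1` is harmless: its coefficient vanishes.
theorem List.prod_ofFn_pow_mul_eq_mul_add_smul {m : ℕ} (S : Fin m → A)
    (hS : ∀ i k, Commute (S i) (S k))
    {b : A} {j : Fin m} {r : R} (hb : ∀ i ≠ j, Commute (S i) b)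
    (hj : S j * b = b * S j + r • 1) (I : Fin m → ℕ) :
    (List.ofFn fun i => S i ^ I i).prod * b
      = b * (List.ofFn fun i => S i ^ I i).prod
        + ((I j : R) * r) • (List.ofFn fun i => S i ^ update I j (I j - 1) i).prod := by
  have hrest : Commute (List.ofFn fun i => S i ^ update I j 0 i).prod b := by
    refine Commute.list_prod_left _ _ fun x hx => ?_
    obtain ⟨i, rfl⟩ := List.mem_ofFn.mp hx
    by_cases hij : i = j
    · simp [hij]
    · exact (hb i hij).pow_left _
  have hI := prod_ofFn_pow_update S hS I j (I j)
  rw [update_eq_self] at hI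
  rw [hI, prod_ofFn_pow_update S hS I j (I j - 1), mul_assoc, hrest.eq, ← mul_assoc,
    pow_mul_eq_mul_pow_add_smul hj, add_mul, smul_mul_assoc, mul_assoc]

end CanonicalCommutation

theorem Nat.multinomial_update_succ_mul {ι : Type*} [DecidableEq ι] {s : Finset ι} {j : ι}
    (hj : j ∈ s) (f : ι → ℕ) :
    Nat.multinomial s (update f j (f j + 1)) * (f j + 1)
      = (∑ i ∈ s, f i + 1) * Nat.multinomial s f := by
  have hup : ∀ i ∈ s.erase j, update f j (f j + 1) i = f i :=
    fun i hi => update_of_ne (ne_of_mem_erase hi) _ _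
  rw [← insert_erase hj, multinomial_insert (notMem_erase j s),
    multinomial_insert (notMem_erase j s), sum_insert (notMem_erase j s), update_self,
    sum_congr rfl hup, multinomial_congr hup, mul_right_comm, add_right_comm (f j) 1,
    ← Nat.add_one_mul_choose_eq]
  ring

theorem Nat.cast_multinomial {K ι : Type*} [Field K] [CharZero K] (s : Finset ι)
    (f : ι → ℕ) :
    (Nat.multinomial s f : K) = ((∑ i ∈ s, f i)! : K) / ∏ i ∈ s, ((f i)! : K) := by
  rw [eq_div_iff (prod_ne_zero_iff.mpr fun i _ => by exact_mod_cast factorial_ne_zero _),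
    mul_comm]
  exact_mod_cast Nat.multinomial_spec s f

theorem Finset.sum_update_add_self {ι β : Type*} [DecidableEq ι] [AddCommMonoid β]
    {s : Finset ι} {j : ι} (hj : j ∈ s) (f : ι → β) (b : β) :
    ∑ i ∈ s, update f j b i + f j = ∑ i ∈ s, f i + b := by
  rw [sum_update_of_mem hj, sdiff_singleton_eq_erase, ← add_sum_erase s f hj]
  abel

theorem Finset.Nat.sum_antidiagonalTuple_succ_eq {β : Type*} [AddCommMonoid β] {m q : ℕ}
    (j : Fin m) (f : (Fin m → ℕ) → β) (hf : ∀ I, I j = 0 → f I = 0) :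
    ∑ I ∈ antidiagonalTuple m (q + 1), f I
      = ∑ J ∈ antidiagonalTuple m q, f (update J j (J j + 1)) := by
  symm
  refine sum_bij_ne_zero (fun J _ _ => update J j (J j + 1)) ?_ ?_ ?_ (fun _ _ _ => rfl)
  · intro J hJ _
    rw [mem_antidiagonalTuple] at hJ ⊢
    have := sum_update_add_self (mem_univ j) J (J j + 1)
    omega
  · intro J₁ _ _ J₂ _ _ h
    funext i
    by_cases hij : i = j
    · subst hij
      simpa using congrFun h i
    · simpa [update_of_ne hij] using congrFun h i
  · intro I hI hfI
    have hIj : I j ≠ 0 := fun h0 => hfI (hf I h0)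
    have hback : update (update I j (I j - 1)) j (update I j (I j - 1) j + 1) = I := by
      simp [Nat.sub_add_cancel (Nat.one_le_iff_ne_zero.mpr hIj)]
    refine ⟨update I j (I j - 1), ?_, by rwa [hback], hback⟩
    rw [mem_antidiagonalTuple] at hI ⊢
    have := sum_update_add_self (mem_univ j) I (I j - 1)
    omega

/-- Lemma 4 of the paper: With `M` an ℝ-module and commuting families
`d j`, `S i` of endomorphisms satisfying `S i d j − d j S i = r δ^i_j id`, write
`d_J = d₁^{J 1} ⋯ d_m^{J m}` and `S^J = (S¹)^{J 1} ⋯ (Sᵐ)^{J m}` for a multi-index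
`J ∈ ℕ^m`, and `|J|!/J!` for its weight.  Then for every `p ≥ 1` and every `j`,
`Σ_{|I|=p} (|I|!/I!) d_I S^I d_j
   = d_j (Σ_{|I|=p} (|I|!/I!) d_I S^I + r p Σ_{|J|=p−1} (|J|!/J!) d_J S^J)`. -/
theorem lemma4_multiindex_commutation
    (M : Type) [AddCommGroup M] [Module ℝ M] (m : ℕ)
    (d S : Fin m → Module.End ℝ M) (r : ℝ)
    (hd : ∀ i j, d i * d j = d j * d i)
    (hS : ∀ i j, S i * S j = S j * S i)
    (hSd : ∀ i j, S i * d j - d j * S i = (if i = j then r else 0) • (1 : Module.End ℝ M))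
    (dJ SJ : (Fin m → ℕ) → Module.End ℝ M)
    (hdJ : ∀ J, dJ J = (List.ofFn fun i => d i ^ J i).prod)
    (hSJ : ∀ J, SJ J = (List.ofFn fun i => S i ^ J i).prod)
    (w : (Fin m → ℕ) → ℝ)
    (hw : ∀ J, w J = ((∑ i, J i).factorial : ℝ) / ∏ i, ((J i).factorial : ℝ))
    (p : ℕ) (hp : 1 ≤ p) (j : Fin m) :
    ∑ I ∈ Finset.Nat.antidiagonalTuple m p, w I • (dJ I * SJ I * d j)
      = d j * (∑ I ∈ Finset.Nat.antidiagonalTuple m p, w I • (dJ I * SJ I)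
          + (r * (p : ℝ)) •
            ∑ J ∈ Finset.Nat.antidiagonalTuple m (p - 1), w J • (dJ J * SJ J)) := by
  obtain ⟨q, rfl⟩ : ∃ q, p = q + 1 := ⟨p - 1, by omega⟩
  have hSd_ne : ∀ i ≠ j, Commute (S i) (d j) :=
    fun i hij => sub_eq_zero.mp (by simpa [hij] using hSd i j)
  have hSd_self : S j * d j = d j * S j + r • 1 :=
    sub_eq_iff_eq_add'.mp (by simpa using hSd j j)
  have hcomm : ∀ I, dJ I * SJ I * d j
      = d j * (dJ I * SJ I) + ((I j : ℝ) * r) • (dJ I * SJ (update I j (I j - 1))) := by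
    intro I
    have hdI : Commute (d j) (dJ I) := hdJ I ▸ Commute.list_prod_right _ _ fun x hx => by
      obtain ⟨i, rfl⟩ := List.mem_ofFn.mp hx
      exact Commute.pow_right (hd j i) _
    rw [mul_assoc, hSJ, hSJ, List.prod_ofFn_pow_mul_eq_mul_add_smul S hS hSd_ne hSd_self,
      mul_add, ← mul_assoc, ← hdI.eq, mul_assoc, mul_smul_comm]
  have hdup : ∀ J, dJ (update J j (J j + 1)) = d j * dJ J := fun J => by
    rw [hdJ, hdJ, List.prod_ofFn_pow_update_succ d hd J j]
  have hweight : ∀ J ∈ Nat.antidiagonalTuple m q,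
      w (update J j (J j + 1)) * (J j + 1) = (q + 1) * w J := by
    intro J hJ
    rw [hw, hw, ← Nat.cast_multinomial, ← Nat.cast_multinomial,
      ← Nat.mem_antidiagonalTuple.mp hJ]
    exact_mod_cast Nat.multinomial_update_succ_mul (mem_univ j) J
  have hshift : ∑ I ∈ Nat.antidiagonalTuple m (q + 1),
      (w I * ((I j : ℝ) * r)) • (dJ I * SJ (update I j (I j - 1)))
        = ∑ J ∈ Nat.antidiagonalTuple m q, (r * (q + 1) * w J) • (d j * (dJ J * SJ J)) := by
    rw [Nat.sum_antidiagonalTuple_succ_eq j _ fun I hI => by simp [hI]]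
    refine sum_congr rfl fun J hJ => ?_
    rw [update_self, add_tsub_cancel_right, update_idem, update_eq_self, hdup, mul_assoc]
    congr 1
    push_cast
    linear_combination r * hweight J hJ
  simp only [hcomm, smul_add, sum_add_distrib, smul_smul, hshift, add_tsub_cancel_right,
    Nat.cast_add_one, mul_add (d j), mul_sum, smul_sum, mul_smul_comm]
end

section
/- In the polynomial model with variables u^α_I (|I| ≤ 1, α ∈ {1,...,n}, m ≥ 2, indices i,j ∈ {1,...,m}), the vector-valued 2-form Φ = Σ_{α,i,j} du^α_i ∧ du^α_j ⊗ dt^i ∧ dt^j satisfies d_T Φ = 0, but there is no Ψ = Σ Ψ_{αβj} du^α ∧ du^β ⊗ dt^j with coefficients Ψ_{αβj} functions of the order-0 variables and antisymmetric in (α,β) such that d_T Ψ = Φ; here d_T(θ ⊗ w) = Σ_k d_k θ ⊗ dt^k ∧ w with d_k the total derivative. -/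
open MvPolynomial Finset

/-- Index type of the jet variables `u^α_I`. -/
def JetIdx (n m : ℕ) : Type := Fin n × (Fin m → ℕ)

/-- The polynomial ring in the jet variables (the "functions"). -/
def JetPoly (n m : ℕ) : Type := MvPolynomial (JetIdx n m) ℝ

noncomputable instance (n m : ℕ) : CommRing (JetPoly n m) :=
  inferInstanceAs (CommRing (MvPolynomial (JetIdx n m) ℝ))

/-- The algebra of forms: the exterior algebra over `JetPoly` on the free module
generated by the symbols `du^α_I` and `dt^i`. -/
def FormAlg (n m : ℕ) : Type :=
  ExteriorAlgebra (JetPoly n m) ((JetIdx n m ⊕ Fin m) →₀ JetPoly n m)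

noncomputable instance (n m : ℕ) : Ring (FormAlg n m) :=
  inferInstanceAs (Ring (ExteriorAlgebra (JetPoly n m) _))

noncomputable instance (n m : ℕ) : Algebra (JetPoly n m) (FormAlg n m) :=
  inferInstanceAs (Algebra (JetPoly n m) (ExteriorAlgebra (JetPoly n m) _))

noncomputable instance (n m : ℕ) : Module ℝ (JetPoly n m) :=
  inferInstanceAs (Module ℝ (MvPolynomial (JetIdx n m) ℝ))

instance (n m : ℕ) : SMulCommClass ℝ (JetPoly n m) (JetPoly n m) :=
  Algebra.to_smulCommClass (R := ℝ) (A := MvPolynomial (JetIdx n m) ℝ)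

noncomputable instance (n m : ℕ) : Module (JetPoly n m) (FormAlg n m) :=
  inferInstanceAs (Module (JetPoly n m) (ExteriorAlgebra (JetPoly n m) _))

/-- The generator `du^α_I`. -/
noncomputable def du {n m : ℕ} (v : JetIdx n m) : FormAlg n m :=
  ExteriorAlgebra.ι (JetPoly n m) (Finsupp.single (Sum.inl v) 1)

/-- The generator `dt^i`. -/
noncomputable def dt {n m : ℕ} (i : Fin m) : FormAlg n m :=
  ExteriorAlgebra.ι (JetPoly n m) (Finsupp.single (Sum.inr i) 1)

/-- The unit multi-index `1_i`. -/
def unitIdx {m : ℕ} (i : Fin m) : Fin m → ℕ := Pi.single i 1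

/-- The total derivative `d_i = Σ_{|I| ≤ 1} u^α_{I+1_i} ∂/∂u^α_I` acting on
functions (polynomials) involving at most first-order variables. -/
noncomputable def Dtot {n m : ℕ} (i : Fin m) : JetPoly n m →ₗ[ℝ] JetPoly n m :=
  ∑ α : Fin n, ∑ p ∈ Finset.range 2, ∑ I ∈ Finset.Nat.antidiagonalTuple m p,
    (LinearMap.mulLeft ℝ (A := JetPoly n m) (X (α, I + unitIdx i))).comp
      (MvPolynomial.pderiv (α, I)).toLinearMap

/-- The `d_T`-closed form `Φ = Σ_{α,i,j} du^α_i ∧ du^α_j ⊗ dt^i ∧ dt^j`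
(a tensor `θ ⊗ w` being encoded as the product `θ * w` in `FormAlg`). -/
noncomputable def PhiForm (n m : ℕ) : FormAlg n m :=
  ∑ α : Fin n, ∑ i : Fin m, ∑ j : Fin m,
    du (α, unitIdx i) * du (α, unitIdx j) * dt i * dt j

/-!
`d_T Φ` splits into two sums in which the coefficient of `dt^k ∧ dt^i ∧ dt^j` is symmetric in two
of the three indices (`1_i + 1_k = 1_k + 1_i`), so both vanish by antisymmetry of the wedge product.

For non-exactness, read off the coordinate of `du^{α₀}_{i₀} ∧ du^{α₀}_{j₀} ∧ dt^{i₀} ∧ dt^{j₀}`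
(`i₀ ≠ j₀`), i.e. the determinant of the coordinates of the four factors. Every term of `d_T Ψ`
has a factor `du^β` of order zero, whose coordinate row is zero; in `Φ` exactly the terms
`(i, j) = (i₀, j₀)` and `(j₀, i₀)` contribute, each with `+1`, so the coordinate of `Φ` is `2`.
-/

theorem Finset.sum_sum_eq_zero_of_antisymm {ι M : Type*} [Fintype ι] [AddCommGroup M]
    (f : ι → ι → M) (hf : ∀ k i, f k i = -f i k) (hdiag : ∀ k, f k k = 0) :
    ∑ k, ∑ i, f k i = 0 := by
  rw [← Finset.sum_product']
  refine Finset.sum_ninvolution Prod.swap (fun p => by simp [hf p.1 p.2]) ?_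
    (fun _ => Finset.mem_univ _) Prod.swap_swap
  rintro ⟨k, i⟩ hne hswap
  obtain rfl : i = k := congrArg Prod.fst hswap
  exact hne (hdiag i)

theorem Matrix.det_fin_four_of_blockTriangular {R : Type*} [CommRing R]
    (A : Matrix (Fin 4) (Fin 4) R) (h₂₀ : A 2 0 = 0) (h₂₁ : A 2 1 = 0) (h₃₀ : A 3 0 = 0)
    (h₃₁ : A 3 1 = 0) :
    A.det = (A 0 0 * A 1 1 - A 0 1 * A 1 0) * (A 2 2 * A 3 3 - A 2 3 * A 3 2) := by
  simp [Matrix.det_succ_row_zero, Fin.sum_univ_succ, show Fin.succAbove (1 : Fin 4) 2 = 3 from rfl,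
    h₂₀, h₂₁, h₃₀, h₃₁]
  ring

namespace ExteriorAlgebra

variable {R M : Type*} [CommRing R] [AddCommGroup M] [Module R M]

theorem ι_mul_ι_comm (x y : M) : ι R x * ι R y = -(ι R y * ι R x) :=
  eq_neg_of_add_eq_zero_left (ι_add_mul_swap x y)

theorem ι_mul_ι_mul_ι_eq_neg_rev (x y z : M) :
    ι R x * ι R y * ι R z = -(ι R z * ι R y * ι R x) := by
  rw [ι_mul_ι_comm x y, neg_mul, mul_assoc, ι_mul_ι_comm x z, mul_neg, neg_neg, ← mul_assoc,
    ι_mul_ι_comm y z, neg_mul]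

theorem ι_mul_ι_mul_ι_self (x y : M) : ι R x * ι R y * ι R x = 0 := by
  rw [ι_mul_ι_comm x y, neg_mul, mul_assoc, ι_sq_zero, mul_zero, neg_zero]

theorem ι_mul_ι_mul_ι_mul_ι (a b c d : M) :
    ι R a * ι R b * ι R c * ι R d = ιMulti R 4 ![a, b, c, d] := by
  simp [mul_assoc, Matrix.vecTail]

section SymmetricCoefficients

variable {σ τ : Type*} [Fintype σ] [Fintype τ]

theorem sum_mul_ι_mul_ι_mul_ι_eq_zero_of_symm₁₂ (x : σ → M)
    (C : σ → σ → τ → ExteriorAlgebra R M) (hC : ∀ k i j, C k i j = C i k j) (y : τ → M) :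
    ∑ k, ∑ i, ∑ j, C k i j * ι R (x k) * ι R (x i) * ι R (y j) = 0 := by
  refine Finset.sum_sum_eq_zero_of_antisymm _ (fun k i => ?_) (fun k => ?_)
  · rw [← Finset.sum_neg_distrib]
    refine Finset.sum_congr rfl fun j _ => ?_
    rw [hC, mul_assoc _ (ι R (x k)), ι_mul_ι_comm, mul_assoc _ (ι R (x i))]
    noncomm_ring
  · refine Finset.sum_eq_zero fun j _ => ?_
    rw [mul_assoc (C k k j), ι_sq_zero, mul_zero, zero_mul]

theorem sum_mul_ι_mul_ι_mul_ι_eq_zero_of_symm₁₃ (x : σ → M)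
    (C : σ → τ → σ → ExteriorAlgebra R M) (hC : ∀ k i j, C k i j = C j i k) (y : τ → M) :
    ∑ k, ∑ i, ∑ j, C k i j * ι R (x k) * ι R (y i) * ι R (x j) = 0 := by
  rw [Finset.sum_congr rfl fun k _ => Finset.sum_comm]
  refine Finset.sum_sum_eq_zero_of_antisymm _ (fun k j => ?_) (fun k => ?_)
  · rw [← Finset.sum_neg_distrib]
    refine Finset.sum_congr rfl fun i _ => ?_
    rw [hC, mul_assoc, mul_assoc, ← mul_assoc (ι R (x k)), ι_mul_ι_mul_ι_eq_neg_rev]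
    noncomm_ring
  · refine Finset.sum_eq_zero fun i _ => ?_
    rw [mul_assoc, mul_assoc, ← mul_assoc (ι R (x k)), ι_mul_ι_mul_ι_self, mul_zero]

end SymmetricCoefficients

/-- The pairing of `⋀ᵏ M` with `φ 0 ∧ ⋯ ∧ φ (k - 1)`, extended by zero to the other degrees. -/
def detPairing {k : ℕ} (φ : Fin k → Module.Dual R M) : ExteriorAlgebra R M →ₗ[R] R :=
  liftAlternating (Pi.single k (Matrix.detRowAlternating.compLinearMap (LinearMap.pi φ)))

theorem detPairing_ιMulti {k : ℕ} (φ : Fin k → Module.Dual R M) (v : Fin k → M) :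
    detPairing φ (ιMulti R k v) = (Matrix.of fun s r => φ r (v s)).det := by
  simp only [detPairing, liftAlternating_apply_ιMulti, Pi.single_eq_same,
    AlternatingMap.compLinearMap_apply]
  rfl

variable {κ : Type*}

/-- The coordinate of `e (key 0) ∧ ⋯ ∧ e (key (k - 1))`, where `e a = single a 1`. -/
noncomputable def basisCoeff {k : ℕ} (key : Fin k → κ) : ExteriorAlgebra R (κ →₀ R) →ₗ[R] R :=
  detPairing fun r => Finsupp.lapply (key r)

theorem basisCoeff_ιMulti_single [DecidableEq κ] {k : ℕ} (key v : Fin k → κ) :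
    basisCoeff key (ιMulti R k fun s => Finsupp.single (v s) (1 : R)) =
      (Matrix.of fun s r => if v s = key r then (1 : R) else 0).det := by
  simp [basisCoeff, detPairing_ιMulti, Finsupp.single_apply]

end ExteriorAlgebra

open ExteriorAlgebra

section JetForms

variable {n m : ℕ}

instance : DecidableEq (JetIdx n m) := inferInstanceAs (DecidableEq (Fin n × (Fin m → ℕ)))

instance : CharZero (JetPoly n m) := inferInstanceAs (CharZero (MvPolynomial (JetIdx n m) ℝ))

theorem unitIdx_injective : Function.Injective (unitIdx (m := m)) := fun i j h => by
  by_contra hij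
  simpa [unitIdx, Pi.single_apply, hij] using congrFun h i

theorem unitIdx_ne_zero (i : Fin m) : unitIdx i ≠ 0 := fun h => by
  simpa [unitIdx] using congrFun h i

-- `JetIdx` is not reducible, so `Sum.inl.injEq` and `Prod.mk.injEq` do not fire on its pairs.
theorem inl_jetIdx_inj {α β : Fin n} {I J : Fin m → ℕ} :
    (Sum.inl (α, I) : JetIdx n m ⊕ Fin m) = .inl (β, J) ↔ α = β ∧ I = J :=
  Sum.inl_injective.eq_iff.trans Prod.ext_iff

theorem du_mul_du_mul_dt_mul_dt (a b : JetIdx n m) (i j : Fin m) :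
    (du a * du b * dt i * dt j : FormAlg n m) = ιMulti (JetPoly n m) 4
      fun s => Finsupp.single (![.inl a, .inl b, .inr i, .inr j] s) 1 := by
  refine (ι_mul_ι_mul_ι_mul_ι _ _ _ _).trans (congrArg _ ?_)
  ext s : 1
  fin_cases s <;> rfl

def firstOrderKey (α₀ : Fin n) (i₀ j₀ : Fin m) : Fin 4 → JetIdx n m ⊕ Fin m :=
  ![.inl (α₀, unitIdx i₀), .inl (α₀, unitIdx j₀), .inr i₀, .inr j₀]

/-- The coefficient of `du^{α₀}_{i₀} ∧ du^{α₀}_{j₀} ∧ dt^{i₀} ∧ dt^{j₀}`. -/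
noncomputable def firstOrderCoeff (α₀ : Fin n) (i₀ j₀ : Fin m) :
    FormAlg n m →ₗ[JetPoly n m] JetPoly n m :=
  basisCoeff (firstOrderKey α₀ i₀ j₀)

theorem firstOrderCoeff_du_mul_du_mul_dt_mul_dt (α₀ : Fin n) (i₀ j₀ : Fin m)
    (a b : JetIdx n m) (i j : Fin m) :
    firstOrderCoeff α₀ i₀ j₀ (du a * du b * dt i * dt j) = (Matrix.of fun s r =>
      if ![.inl a, .inl b, .inr i, .inr j] s = firstOrderKey α₀ i₀ j₀ r then 1 else 0).det := by
  rw [du_mul_du_mul_dt_mul_dt]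
  exact basisCoeff_ιMulti_single _ _

theorem firstOrderCoeff_eq_zero_of_order_zero (α₀ : Fin n) (i₀ j₀ : Fin m) (α β : Fin n)
    (I J : Fin m → ℕ) (i j : Fin m) (hIJ : I = 0 ∨ J = 0) :
    firstOrderCoeff α₀ i₀ j₀ (du (α, I) * du (β, J) * dt i * dt j) = 0 := by
  have key_ne (γ : Fin n) (r : Fin 4) : .inl (γ, 0) ≠ firstOrderKey α₀ i₀ j₀ r := by
    fin_cases r <;> simp [firstOrderKey, inl_jetIdx_inj, (unitIdx_ne_zero _).symm]
  refine (firstOrderCoeff_du_mul_du_mul_dt_mul_dt _ _ _ _ _ _ _).trans ?_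
  rcases hIJ with rfl | rfl
  · exact Matrix.det_eq_zero_of_row_eq_zero 0 fun r => by simp [key_ne α r]
  · exact Matrix.det_eq_zero_of_row_eq_zero 1 fun r => by simp [key_ne β r]

theorem firstOrderCoeff_PhiForm_term (α₀ : Fin n) {i₀ j₀ : Fin m} (hij : i₀ ≠ j₀) (α : Fin n)
    (i j : Fin m) :
    firstOrderCoeff α₀ i₀ j₀ (du (α, unitIdx i) * du (α, unitIdx j) * dt i * dt j) =
      (if α = α₀ ∧ i = i₀ ∧ j = j₀ then 1 else 0) +
        (if α = α₀ ∧ i = j₀ ∧ j = i₀ then 1 else 0) := by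
  refine (firstOrderCoeff_du_mul_du_mul_dt_mul_dt _ _ _ _ _ _ _).trans ?_
  rw [Matrix.det_fin_four_of_blockTriangular] <;>
    simp only [firstOrderKey, inl_jetIdx_inj, unitIdx_injective.eq_iff, Matrix.of_apply,
      Matrix.cons_val, Sum.inr.injEq, reduceCtorEq, if_false]
  split_ifs <;> simp_all

theorem firstOrderCoeff_PhiForm (α₀ : Fin n) {i₀ j₀ : Fin m} (hij : i₀ ≠ j₀) :
    firstOrderCoeff α₀ i₀ j₀ (PhiForm n m) = 2 := by
  simp only [PhiForm, map_sum, firstOrderCoeff_PhiForm_term α₀ hij]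
  norm_num [Finset.sum_add_distrib, ite_and]

end JetForms

/-- `Φ` satisfies `d_T Φ = 0`, but no `Ψ = Σ Ψ_{αβj} du^α ∧ du^β ⊗ dt^j`
with coefficients `Ψ_{αβj}` depending only on order-0 variables and antisymmetric
in `(α,β)` has `d_T Ψ = Φ`. -/
theorem homogeneous_complex_not_exact_without_pullback
    (n m : ℕ) (hn : 1 ≤ n) (hm : 2 ≤ m) :
    -- `d_T Φ = 0` :
    (∑ α : Fin n, ∑ k : Fin m, ∑ i : Fin m, ∑ j : Fin m,
        (du (α, unitIdx i + unitIdx k) * du (α, unitIdx j)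
          + du (α, unitIdx i) * du (α, unitIdx j + unitIdx k)) * dt k * dt i * dt j
      = (0 : FormAlg n m))
    ∧
    -- no suitable `Ψ` has `d_T Ψ = Φ` :
    ∀ Ψc : Fin n → Fin n → Fin m → JetPoly n m,
      (∀ α β j, ∀ v ∈ (show MvPolynomial (JetIdx n m) ℝ from Ψc α β j).vars,
        v.2 = 0) →
      (∀ α β j, Ψc α β j = - Ψc β α j) →
      (∑ α : Fin n, ∑ β : Fin n, ∑ i : Fin m, ∑ j : Fin m,
          (Dtot i (Ψc α β j)) • (du (α, 0) * du (β, 0) * dt i * dt j)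
        + ∑ α : Fin n, ∑ β : Fin n, ∑ i : Fin m, ∑ j : Fin m,
            (Ψc α β j) •
              ((du (α, unitIdx i) * du (β, 0) + du (α, 0) * du (β, unitIdx i))
                * dt i * dt j))
        ≠ PhiForm n m := by
  refine ⟨?_, fun Ψc _ _ hΨ => ?_⟩
  · have symm₁₂ (α : Fin n) : ∑ k : Fin m, ∑ i : Fin m, ∑ j : Fin m,
        du (α, unitIdx i + unitIdx k) * du (α, unitIdx j) * dt k * dt i * dt j = 0 :=
      sum_mul_ι_mul_ι_mul_ι_eq_zero_of_symm₁₂ _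
        (fun k i j => du (α, unitIdx i + unitIdx k) * du (α, unitIdx j))
        (fun k i j => by rw [add_comm]) _
    have symm₁₃ (α : Fin n) : ∑ k : Fin m, ∑ i : Fin m, ∑ j : Fin m,
        du (α, unitIdx i) * du (α, unitIdx j + unitIdx k) * dt k * dt i * dt j = 0 :=
      sum_mul_ι_mul_ι_mul_ι_eq_zero_of_symm₁₃ _
        (fun k i j => du (α, unitIdx i) * du (α, unitIdx j + unitIdx k))
        (fun k i j => by rw [add_comm]) _
    simp only [add_mul, Finset.sum_add_distrib, symm₁₂, symm₁₃, Finset.sum_const_zero, add_zero]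
  · obtain ⟨i₀, j₀, hij⟩ := (Fin.nontrivial_iff_two_le.2 hm).exists_pair_ne
    have h := congrArg (firstOrderCoeff ⟨0, hn⟩ i₀ j₀) hΨ
    simp only [add_mul, map_add, map_sum, map_smul, firstOrderCoeff_eq_zero_of_order_zero,
      or_true, true_or, smul_zero, Finset.sum_const_zero, add_zero,
      firstOrderCoeff_PhiForm _ hij] at h
    exact two_ne_zero h.symm
end

section
/- Let B^{r,s} and maps d, d_T, P be as in a bicomplex with d d_T = d_T d, d² = 0, d_T² = 0, and d_T P + P d_T = id on B^{r,s} for 1 ≤ s ≤ m. Suppose the rows are exact: ker(d : B^{r,m} → B^{r+1,m}) = im(d : B^{r−1,m} → B^{r,m}) for r ≥ 1, and ker(d_T d : B^{r,m-1} → B^{r+1,m}) ⊆ im d + im d_T (the conclusion of Lemma 5 at s = m−1). Then ker(δ∘p_r : B^{r,m} → Ξ^{r+1}) ⊆ im(d : B^{r−1,m} → B^{r,m}) + im(d_T : B^{r,m−1} → B^{r,m}), where Ξ^{r+1} = B^{r+1,m}/d_T(B^{r+1,m−1}), p is the quotient projection, and δ : Ξ^r → Ξ^{r+1} is the map induced by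 d on the quotients. -/
/-! If `d Φ = d_T X`, then `X` is itself in the kernel of `d_T d` (as `d_T d X = d d_T X = d d Φ = 0`),
so the hypothesis on row `m - 1` writes `X = d y + d_T z`. Then `d (Φ - d_T y) = d_T (X - d y) = d_T d_T z = 0`,
and exactness of the bottom row gives `Φ - d_T y = d Ψ`. -/

section Bicomplex

variable {R : Type*} [Semiring R] {B : ℕ → ℕ → Type*}
  [∀ r s, AddCommGroup (B r s)] [∀ r s, Module R (B r s)]
  {d : ∀ r s, B r s →ₗ[R] B (r + 1) s} {dT : ∀ r s, B r s →ₗ[R] B r (s + 1)}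

theorem dT_d_eq_zero_of_d_eq_dT
    (hcomm : ∀ r s (x : B r s), dT (r + 1) s (d r s x) = d r (s + 1) (dT r s x))
    (hdd : ∀ r s (x : B r s), d (r + 1) s (d r s x) = 0)
    {r s : ℕ} {Φ : B (r + 1) (s + 1)} {X : B (r + 2) s}
    (hΦ : d (r + 1) (s + 1) Φ = dT (r + 2) s X) :
    dT (r + 3) s (d (r + 2) s X) = 0 := by
  rw [hcomm, ← hΦ, hdd]

theorem d_sub_dT_eq_zero_of_d_eq_dT
    (hcomm : ∀ r s (x : B r s), dT (r + 1) s (d r s x) = d r (s + 1) (dT r s x))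
    (hdTdT : ∀ r s (x : B r s), dT r (s + 1) (dT r s x) = 0)
    {r s : ℕ} {Φ : B (r + 1) (s + 2)} {X : B (r + 2) (s + 1)}
    {y : B (r + 1) (s + 1)} {z : B (r + 2) s}
    (hΦ : d (r + 1) (s + 2) Φ = dT (r + 2) (s + 1) X)
    (hX : X = d (r + 1) (s + 1) y + dT (r + 2) s z) :
    d (r + 1) (s + 2) (Φ - dT (r + 1) (s + 1) y) = 0 := by
  rw [map_sub, hΦ, ← hcomm, hX, map_add, hdTdT, add_zero, sub_self]

end Bicomplex

theorem lemma7_bottom_row_exactness_general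
    (u : ℕ) (B : ℕ → ℕ → Type)
    [∀ r s, AddCommGroup (B r s)] [∀ r s, Module ℝ (B r s)]
    (d : ∀ r s, B r s →ₗ[ℝ] B (r + 1) s)
    (dT : ∀ r s, B r s →ₗ[ℝ] B r (s + 1))
    (hcomm : ∀ r s (x : B r s), dT (r + 1) s (d r s x) = d r (s + 1) (dT r s x))
    (hdd : ∀ r s (x : B r s), d (r + 1) s (d r s x) = 0)
    (hdTdT : ∀ r s (x : B r s), dT r (s + 1) (dT r s x) = 0)
    (hrowexact : ∀ r (x : B (r + 1) (u + 2)),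
      d (r + 1) (u + 2) x = 0 → ∃ y : B r (u + 2), d r (u + 2) y = x)
    (hlemma5 : ∀ r (x : B (r + 1) (u + 1)),
      dT (r + 2) (u + 1) (d (r + 1) (u + 1) x) = 0 →
      ∃ (y : B r (u + 1)) (z : B (r + 1) u),
        x = d r (u + 1) y + dT (r + 1) u z)
    (r : ℕ) (Φ : B (r + 1) (u + 2))
    (hΦ : ∃ X : B (r + 2) (u + 1), d (r + 1) (u + 2) Φ = dT (r + 2) (u + 1) X) :
    ∃ (Ψ : B r (u + 2)) (Y : B (r + 1) (u + 1)),
      Φ = d r (u + 2) Ψ + dT (r + 1) (u + 1) Y := by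
  obtain ⟨X, hX⟩ := hΦ
  obtain ⟨y, z, hyz⟩ := hlemma5 (r + 1) X (dT_d_eq_zero_of_d_eq_dT hcomm hdd hX)
  obtain ⟨Ψ, hΨ⟩ := hrowexact r _ (d_sub_dT_eq_zero_of_d_eq_dT hcomm hdTdT hX hyz)
  exact ⟨Ψ, y, by rw [hΨ, sub_add_cancel]⟩

/-- Lemma 7 of the paper, first assertion: In a bicomplex `B^{r,s}`
(with `m = u + 2`, commuting differentials `d`, `d_T`, `d² = 0`, `d_T² = 0`) with
homotopy operators `P` satisfying `d_T P + P d_T = id` on `B^{r,s}` for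
`1 ≤ s ≤ m`, suppose the bottom row is exact
(`ker d = im d` on `B^{r,m}` for `r ≥ 1`) and the conclusion of Lemma 5 holds at
`s = m − 1` (`ker (d_T d) ⊆ im d + im d_T`).  Then
`ker (δ ∘ p_r : B^{r,m} → Ξ^{r+1}) ⊆ im d + im d_T`, i.e. whenever
`d Φ ∈ d_T(B^{r+1,m−1})` one has `Φ = d Ψ + d_T Y` (stated with `r` replaced by
`r + 1`; `δ ∘ p_r Φ = 0` in `Ξ^{r+1} = B^{r+1,m}/d_T(B^{r+1,m−1})` means exactly
`d Φ ∈ im d_T`). -/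
theorem lemma7_bottom_row_exactness
    (u : ℕ) (B : ℕ → ℕ → Type)
    [∀ r s, AddCommGroup (B r s)] [∀ r s, Module ℝ (B r s)]
    (d : ∀ r s, B r s →ₗ[ℝ] B (r + 1) s)
    (dT : ∀ r s, B r s →ₗ[ℝ] B r (s + 1))
    (hcomm : ∀ r s (x : B r s), dT (r + 1) s (d r s x) = d r (s + 1) (dT r s x))
    (hdd : ∀ r s (x : B r s), d (r + 1) s (d r s x) = 0)
    (hdTdT : ∀ r s (x : B r s), dT r (s + 1) (dT r s x) = 0)
    (P : ∀ r s, B r (s + 1) →ₗ[ℝ] B r s)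
    (hhomotopy : ∀ r s, s + 1 ≤ u + 2 →
      ∀ x : B r (s + 1), dT r s (P r s x) + P r (s + 1) (dT r (s + 1) x) = x)
    (hrowexact : ∀ r (x : B (r + 1) (u + 2)),
      d (r + 1) (u + 2) x = 0 → ∃ y : B r (u + 2), d r (u + 2) y = x)
    (hlemma5 : ∀ r (x : B (r + 1) (u + 1)),
      dT (r + 2) (u + 1) (d (r + 1) (u + 1) x) = 0 →
      ∃ (y : B r (u + 1)) (z : B (r + 1) u),
        x = d r (u + 1) y + dT (r + 1) u z)
    (r : ℕ) (Φ : B (r + 1) (u + 2))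
    (hΦ : ∃ X : B (r + 2) (u + 1), d (r + 1) (u + 2) Φ = dT (r + 2) (u + 1) X) :
    ∃ (Ψ : B r (u + 2)) (Y : B (r + 1) (u + 1)),
      Φ = d r (u + 2) Ψ + dT (r + 1) (u + 1) Y :=
  lemma7_bottom_row_exactness_general u B d dT hcomm hdd hdTdT hrowexact hlemma5 r Φ hΦ
end
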